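/- arXiv:2307.05622 — 2 statements merged into one kernel-verified Lean document; each statement's English description precedes it below -/
import Mathlib

section
/- For every real x < −1, the boundary values of d₁ and d₂ exist and satisfy d_{1,+}(x) = d_{2,−}(x) and d_{1,−}(x) = d_{2,+}(x); and for every real x with −1 < x < 0, they satisfy d_{1,+}(x) = d_{2,−}(x)·e^{−2βπi} and d_{1,−}(x) = d_{2,+}(x)·e^{−2βπi}. -/
open Complex Filter Topology Set

/-- `β = ln(1-γ)/(2πi)`. -/
noncomputable def beta (γ : ℝ) : ℂ := Complex.log (1 - γ) / (2 * Real.pi * Complex.I)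

/-- `λ(ζ) = ((ζ-i)/(ζ+i))^β`, principal branch. -/
noncomputable def lam (γ : ℝ) (ζ : ℂ) : ℂ := ((ζ - Complex.I) / (ζ + Complex.I)) ^ (beta γ)

/-- `d₁(z) = λ(z^{1/2})`, principal branch of the square root. -/
noncomputable def d1 (γ : ℝ) (z : ℂ) : ℂ := lam γ (z ^ ((1 : ℂ)/2))

/-- `d₂(z) = λ(-z^{1/2})`, principal branch of the square root. -/
noncomputable def d2 (γ : ℝ) (z : ℂ) : ℂ := lam γ (-(z ^ ((1 : ℂ)/2)))

/-!
As `z → x < 0` from above (below), `z^{1/2} → ζ₀ = i√(-x)` (resp. `-ζ₀`) through the right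
half-plane, while `-z^{1/2}` tends to the same point from the left half-plane. So `d_{1,±}(x)` and
`d_{2,∓}(x)` are both limits of `λ` at `±ζ₀`, approached from opposite sides of the imaginary axis.
The Cayley transform `(ζ - i)/(ζ + i)` maps the right (left) half-plane to the lower (upper)
half-plane and sends `±ζ₀` to a real number of the sign of `|ζ₀|² - 1 = -x - 1`. For `x < -1` this
point lies in the slit plane, where `w ↦ w^β` is continuous, so the two limits agree; for
`-1 < x < 0` it lies on the branch cut, across which `w^β` jumps by the factor `e^{2πiβ}`.
-/

open scoped Real

namespace Complex

theorem tendsto_cpow_nhdsWithin_im_nonneg_of_re_neg_of_im_zero {w : ℂ} (hre : w.re < 0)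
    (him : w.im = 0) (s : ℂ) :
    Tendsto (· ^ s) (𝓝[{z : ℂ | 0 ≤ z.im}] w) (𝓝 ((‖w‖ : ℂ) ^ s * exp (π * I * s))) := by
  have hw : w ≠ 0 := fun h => by simp [h] at hre
  have hlim : (‖w‖ : ℂ) ^ s * exp (π * I * s) = exp ((Real.log ‖w‖ + π * I) * s) := by
    rw [cpow_def_of_ne_zero (ofReal_ne_zero.2 (norm_ne_zero_iff.2 hw)),
      ← ofReal_log (norm_nonneg _), ← exp_add]
    ring_nf
  rw [hlim]
  refine ((continuous_exp.tendsto _).comp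
    ((tendsto_log_nhdsWithin_im_nonneg_of_re_neg_of_im_zero hre him).mul_const s)).congr' ?_
  filter_upwards [nhdsWithin_le_nhds (eventually_ne_nhds hw)] with z hz
  simp [cpow_def_of_ne_zero hz]

theorem tendsto_cpow_nhdsWithin_im_neg_of_re_neg_of_im_zero {w : ℂ} (hre : w.re < 0)
    (him : w.im = 0) (s : ℂ) :
    Tendsto (· ^ s) (𝓝[{z : ℂ | z.im < 0}] w) (𝓝 ((‖w‖ : ℂ) ^ s * exp (-(π * I * s)))) := by
  have hw : w ≠ 0 := fun h => by simp [h] at hre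
  have hlim : (‖w‖ : ℂ) ^ s * exp (-(π * I * s)) = exp ((Real.log ‖w‖ - π * I) * s) := by
    rw [cpow_def_of_ne_zero (ofReal_ne_zero.2 (norm_ne_zero_iff.2 hw)),
      ← ofReal_log (norm_nonneg _), ← exp_add]
    ring_nf
  rw [hlim]
  refine ((continuous_exp.tendsto _).comp
    ((tendsto_log_nhdsWithin_im_neg_of_re_neg_of_im_zero hre him).mul_const s)).congr' ?_
  filter_upwards [nhdsWithin_le_nhds (eventually_ne_nhds hw)] with z hz
  simp [cpow_def_of_ne_zero hz]

theorem re_cpow_one_half_pos {z : ℂ} (hz : z.im ≠ 0) : 0 < (z ^ (1 / 2 : ℂ)).re := by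
  rw [one_div, cpow_inv_two_re]
  have := neg_abs_le z.re
  have := abs_re_lt_norm.2 hz
  exact Real.sqrt_pos.2 (by linarith)

theorem tendsto_cpow_one_half_nhdsWithin_im_pos {x : ℝ} (hx : x < 0) :
    Tendsto (· ^ (1 / 2 : ℂ)) (𝓝[{z : ℂ | 0 < z.im}] (x : ℂ)) (𝓝 (I * √(-x))) := by
  have hsub : {z : ℂ | 0 < z.im} ⊆ {z | 0 ≤ z.im} :=
    ofPred_subset_ofPred.2 fun _ => le_of_lt
  have h := (tendsto_cpow_nhdsWithin_im_nonneg_of_re_neg_of_im_zero (w := x) (by simpa using hx)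
    (ofReal_im x) (1 / 2)).mono_left (nhdsWithin_mono _ hsub)
  convert h using 2
  rw [norm_real, Real.norm_of_nonpos hx.le, Real.sqrt_eq_rpow, ofReal_cpow (by linarith)]
  push_cast
  rw [show (π : ℂ) * I * (1 / 2) = π / 2 * I by ring, exp_pi_div_two_mul_I, mul_comm]

theorem tendsto_cpow_one_half_nhdsWithin_im_neg {x : ℝ} (hx : x < 0) :
    Tendsto (· ^ (1 / 2 : ℂ)) (𝓝[{z : ℂ | z.im < 0}] (x : ℂ)) (𝓝 (-(I * √(-x)))) := by
  have h := tendsto_cpow_nhdsWithin_im_neg_of_re_neg_of_im_zero (w := x) (by simpa using hx)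
    (ofReal_im x) (1 / 2)
  convert h using 2
  rw [norm_real, Real.norm_of_nonpos hx.le, Real.sqrt_eq_rpow, ofReal_cpow (by linarith)]
  push_cast
  rw [show -((π : ℂ) * I * (1 / 2)) = -π / 2 * I by ring, exp_neg_pi_div_two_mul_I]
  ring

theorem tendsto_ofReal_add_mul_I_nhdsWithin_im_pos (x : ℝ) :
    Tendsto (fun ε : ℝ => (x : ℂ) + ε * I) (𝓝[>] 0) (𝓝[{z : ℂ | 0 < z.im}] (x : ℂ)) :=
  tendsto_nhdsWithin_iff.2
    ⟨((by fun_prop : Continuous fun ε : ℝ => (x : ℂ) + ε * I).tendsto' 0 x (by simp)).mono_left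
      nhdsWithin_le_nhds, eventually_nhdsWithin_of_forall fun ε (hε : 0 < ε) => by simpa using hε⟩

theorem tendsto_ofReal_sub_mul_I_nhdsWithin_im_neg (x : ℝ) :
    Tendsto (fun ε : ℝ => (x : ℂ) - ε * I) (𝓝[>] 0) (𝓝[{z : ℂ | z.im < 0}] (x : ℂ)) :=
  tendsto_nhdsWithin_iff.2
    ⟨((by fun_prop : Continuous fun ε : ℝ => (x : ℂ) - ε * I).tendsto' 0 x (by simp)).mono_left
      nhdsWithin_le_nhds, eventually_nhdsWithin_of_forall fun ε (hε : 0 < ε) => by simpa using hε⟩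

end Complex

/-- `lam γ ζ` is definitionally `cayley ζ ^ beta γ`. -/
noncomputable def cayley (ζ : ℂ) : ℂ := (ζ - I) / (ζ + I)

theorem cayley_re (ζ : ℂ) : (cayley ζ).re = (normSq ζ - 1) / normSq (ζ + I) := by
  simp only [cayley, div_re, normSq_apply, sub_re, add_re, sub_im, add_im, I_re, I_im]
  ring

theorem cayley_im (ζ : ℂ) : (cayley ζ).im = -(2 * ζ.re) / normSq (ζ + I) := by
  simp only [cayley, div_im, normSq_apply, sub_re, add_re, sub_im, add_im, I_re, I_im]
  ring

theorem add_I_ne_zero_of_re_ne_zero {ζ : ℂ} (h : ζ.re ≠ 0) : ζ + I ≠ 0 :=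
  fun h₀ => h (by simpa using congrArg re h₀)

theorem add_I_ne_zero_of_normSq_ne_one {ζ : ℂ} (h : normSq ζ ≠ 1) : ζ + I ≠ 0 :=
  fun h₀ => h (by rw [eq_neg_of_add_eq_zero_left h₀]; simp)

theorem cayley_im_neg_of_re_pos {ζ : ℂ} (h : 0 < ζ.re) : (cayley ζ).im < 0 := by
  rw [cayley_im]
  exact div_neg_of_neg_of_pos (by linarith)
    (normSq_pos.2 (add_I_ne_zero_of_re_ne_zero h.ne'))

theorem cayley_im_pos_of_re_neg {ζ : ℂ} (h : ζ.re < 0) : 0 < (cayley ζ).im := by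
  rw [cayley_im]
  exact div_pos (by linarith) (normSq_pos.2 (add_I_ne_zero_of_re_ne_zero h.ne))

section Lam

variable {α : Type*} {l : Filter α} {f : α → ℂ} {ζ₀ : ℂ}

theorem Filter.Tendsto.cayley (hf : Tendsto f l (𝓝 ζ₀)) (h : ζ₀ + I ≠ 0) :
    Tendsto (fun a => cayley (f a)) l (𝓝 (cayley ζ₀)) :=
  (hf.sub_const I).div (hf.add_const I) h

theorem tendsto_lam_of_one_lt_normSq (γ : ℝ) (hf : Tendsto f l (𝓝 ζ₀)) (h : 1 < normSq ζ₀) :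
    Tendsto (fun a => lam γ (f a)) l (𝓝 (lam γ ζ₀)) := by
  have hden := add_I_ne_zero_of_normSq_ne_one h.ne'
  have hslit : cayley ζ₀ ∈ slitPlane :=
    Or.inl (by rw [cayley_re]; exact div_pos (by linarith) (normSq_pos.2 hden))
  exact (continuousAt_cpow_const hslit).tendsto.comp (hf.cayley hden)

theorem cayley_re_neg_of_normSq_lt_one (h : normSq ζ₀ < 1) : (cayley ζ₀).re < 0 := by
  rw [cayley_re]
  exact div_neg_of_neg_of_pos (by linarith) (normSq_pos.2 (add_I_ne_zero_of_normSq_ne_one h.ne))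

theorem tendsto_lam_of_re_pos (γ : ℝ) (hf : Tendsto f l (𝓝 ζ₀)) (hre : ζ₀.re = 0)
    (h : normSq ζ₀ < 1) (hpos : ∀ᶠ a in l, 0 < (f a).re) :
    Tendsto (fun a => lam γ (f a)) l
      (𝓝 ((‖cayley ζ₀‖ : ℂ) ^ beta γ * exp (-(π * I * beta γ)))) := by
  have hc : Tendsto (fun a => cayley (f a)) l (𝓝[{w : ℂ | w.im < 0}] (cayley ζ₀)) :=
    tendsto_nhdsWithin_iff.2 ⟨hf.cayley (add_I_ne_zero_of_normSq_ne_one h.ne),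
      hpos.mono fun _ => cayley_im_neg_of_re_pos⟩
  exact (tendsto_cpow_nhdsWithin_im_neg_of_re_neg_of_im_zero (cayley_re_neg_of_normSq_lt_one h)
    (by simp [cayley_im, hre]) _).comp hc

theorem tendsto_lam_of_re_neg (γ : ℝ) (hf : Tendsto f l (𝓝 ζ₀)) (hre : ζ₀.re = 0)
    (h : normSq ζ₀ < 1) (hneg : ∀ᶠ a in l, (f a).re < 0) :
    Tendsto (fun a => lam γ (f a)) l
      (𝓝 ((‖cayley ζ₀‖ : ℂ) ^ beta γ * exp (π * I * beta γ))) := by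
  have hc : Tendsto (fun a => cayley (f a)) l (𝓝[{w : ℂ | 0 ≤ w.im}] (cayley ζ₀)) :=
    tendsto_nhdsWithin_iff.2 ⟨hf.cayley (add_I_ne_zero_of_normSq_ne_one h.ne),
      hneg.mono fun _ ha => (cayley_im_pos_of_re_neg ha).le⟩
  exact (tendsto_cpow_nhdsWithin_im_nonneg_of_re_neg_of_im_zero (cayley_re_neg_of_normSq_lt_one h)
    (by simp [cayley_im, hre]) _).comp hc

theorem exists_tendsto_lam_of_re_pos_of_re_neg (γ : ℝ) {α' : Type*} {l' : Filter α'}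
    {g : α' → ℂ} (hf : Tendsto f l (𝓝 ζ₀)) (hg : Tendsto g l' (𝓝 ζ₀)) (hre : ζ₀.re = 0)
    (h : normSq ζ₀ < 1) (hpos : ∀ᶠ a in l, 0 < (f a).re) (hneg : ∀ᶠ a in l', (g a).re < 0) :
    ∃ L : ℂ, Tendsto (fun a => lam γ (f a)) l (𝓝 (L * exp (-2 * beta γ * π * I))) ∧
      Tendsto (fun a => lam γ (g a)) l' (𝓝 L) := by
  refine ⟨_, ?_, tendsto_lam_of_re_neg γ hg hre h hneg⟩
  convert tendsto_lam_of_re_pos γ hf hre h hpos using 2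
  rw [mul_assoc, ← exp_add]
  ring_nf

end Lam

theorem normSq_I_mul_sqrt {x : ℝ} (hx : x ≤ 0) : normSq (I * √(-x)) = -x := by
  rw [normSq_mul, normSq_I, normSq_ofReal, Real.mul_self_sqrt (by linarith), one_mul]

section BoundaryValues

variable {x : ℝ}

theorem exists_tendsto_d1_d2_of_lt_neg_one (γ : ℝ) (hx : x < -1) :
    (∃ L : ℂ, Tendsto (d1 γ) (𝓝[{z : ℂ | 0 < z.im}] (x : ℂ)) (𝓝 L) ∧
      Tendsto (d2 γ) (𝓝[{z : ℂ | z.im < 0}] (x : ℂ)) (𝓝 L)) ∧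
    (∃ L : ℂ, Tendsto (d1 γ) (𝓝[{z : ℂ | z.im < 0}] (x : ℂ)) (𝓝 L) ∧
      Tendsto (d2 γ) (𝓝[{z : ℂ | 0 < z.im}] (x : ℂ)) (𝓝 L)) := by
  have hx₀ : x < 0 := by linarith
  have hn : 1 < normSq (I * √(-x)) := by rw [normSq_I_mul_sqrt hx₀.le]; linarith
  have hn' : 1 < normSq (-(I * √(-x))) := by rwa [normSq_neg]
  have hup := tendsto_cpow_one_half_nhdsWithin_im_pos hx₀
  have hdown := tendsto_cpow_one_half_nhdsWithin_im_neg hx₀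
  exact ⟨⟨_, tendsto_lam_of_one_lt_normSq γ hup hn,
      tendsto_lam_of_one_lt_normSq γ (by simpa using hdown.neg) hn⟩,
    ⟨_, tendsto_lam_of_one_lt_normSq γ hdown hn', tendsto_lam_of_one_lt_normSq γ hup.neg hn'⟩⟩

theorem exists_tendsto_d1_d2_of_neg_one_lt (γ : ℝ) (hx₁ : -1 < x) (hx₀ : x < 0) :
    (∃ L : ℂ, Tendsto (d1 γ) (𝓝[{z : ℂ | 0 < z.im}] (x : ℂ))
        (𝓝 (L * exp (-2 * beta γ * π * I))) ∧
      Tendsto (d2 γ) (𝓝[{z : ℂ | z.im < 0}] (x : ℂ)) (𝓝 L)) ∧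
    (∃ L : ℂ, Tendsto (d1 γ) (𝓝[{z : ℂ | z.im < 0}] (x : ℂ))
        (𝓝 (L * exp (-2 * beta γ * π * I))) ∧
      Tendsto (d2 γ) (𝓝[{z : ℂ | 0 < z.im}] (x : ℂ)) (𝓝 L)) := by
  have hn : normSq (I * √(-x)) < 1 := by rw [normSq_I_mul_sqrt hx₀.le]; linarith
  have hn' : normSq (-(I * √(-x))) < 1 := by rwa [normSq_neg]
  have hre : (I * √(-x)).re = 0 := by simp
  have hre' : (-(I * √(-x))).re = 0 := by simp
  have hup := tendsto_cpow_one_half_nhdsWithin_im_pos hx₀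
  have hdown := tendsto_cpow_one_half_nhdsWithin_im_neg hx₀
  have hpos {s : Set ℂ} (hs : ∀ z ∈ s, z.im ≠ 0) :
      ∀ᶠ z in 𝓝[s] (x : ℂ), 0 < (z ^ (1 / 2 : ℂ)).re :=
    eventually_nhdsWithin_of_forall fun z hz => re_cpow_one_half_pos (hs z hz)
  have hneg {s : Set ℂ} (hs : ∀ z ∈ s, z.im ≠ 0) :
      ∀ᶠ z in 𝓝[s] (x : ℂ), (-(z ^ (1 / 2 : ℂ))).re < 0 :=
    (hpos hs).mono fun z hz => by simpa using hz
  have hup_ne : ∀ z ∈ {z : ℂ | 0 < z.im}, z.im ≠ 0 := fun z hz => ne_of_gt hz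
  have hdown_ne : ∀ z ∈ {z : ℂ | z.im < 0}, z.im ≠ 0 := fun z hz => ne_of_lt hz
  exact ⟨exists_tendsto_lam_of_re_pos_of_re_neg γ hup (by simpa using hdown.neg) hre hn
      (hpos hup_ne) (hneg hdown_ne),
    exists_tendsto_lam_of_re_pos_of_re_neg γ hdown hup.neg hre' hn' (hpos hdown_ne)
      (hneg hup_ne)⟩

end BoundaryValues

theorem gap_tacnode_d1_d2_boundary_values_general (γ : ℝ) :
    (∀ x : ℝ, x < -1 →
      ((∃ L : ℂ,
          Tendsto (fun ε : ℝ => d1 γ ((x:ℂ) + ε * Complex.I)) (𝓝[>] (0:ℝ)) (𝓝 L) ∧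
          Tendsto (fun ε : ℝ => d2 γ ((x:ℂ) - ε * Complex.I)) (𝓝[>] (0:ℝ)) (𝓝 L)) ∧
       (∃ L : ℂ,
          Tendsto (fun ε : ℝ => d1 γ ((x:ℂ) - ε * Complex.I)) (𝓝[>] (0:ℝ)) (𝓝 L) ∧
          Tendsto (fun ε : ℝ => d2 γ ((x:ℂ) + ε * Complex.I)) (𝓝[>] (0:ℝ)) (𝓝 L)))) ∧
    (∀ x : ℝ, -1 < x → x < 0 →
      ((∃ L : ℂ,
          Tendsto (fun ε : ℝ => d1 γ ((x:ℂ) + ε * Complex.I)) (𝓝[>] (0:ℝ))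
            (𝓝 (L * Complex.exp (-2 * beta γ * Real.pi * Complex.I))) ∧
          Tendsto (fun ε : ℝ => d2 γ ((x:ℂ) - ε * Complex.I)) (𝓝[>] (0:ℝ)) (𝓝 L)) ∧
       (∃ L : ℂ,
          Tendsto (fun ε : ℝ => d1 γ ((x:ℂ) - ε * Complex.I)) (𝓝[>] (0:ℝ))
            (𝓝 (L * Complex.exp (-2 * beta γ * Real.pi * Complex.I))) ∧
          Tendsto (fun ε : ℝ => d2 γ ((x:ℂ) + ε * Complex.I)) (𝓝[>] (0:ℝ)) (𝓝 L)))) := by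
  have up := tendsto_ofReal_add_mul_I_nhdsWithin_im_pos
  have down := tendsto_ofReal_sub_mul_I_nhdsWithin_im_neg
  refine ⟨fun x hx => ?_, fun x hx₁ hx₀ => ?_⟩
  · obtain ⟨⟨L, h₁, h₂⟩, ⟨L', h₁', h₂'⟩⟩ := exists_tendsto_d1_d2_of_lt_neg_one γ hx
    exact ⟨⟨L, h₁.comp (up x), h₂.comp (down x)⟩, ⟨L', h₁'.comp (down x), h₂'.comp (up x)⟩⟩
  · obtain ⟨⟨L, h₁, h₂⟩, ⟨L', h₁', h₂'⟩⟩ := exists_tendsto_d1_d2_of_neg_one_lt γ hx₁ hx₀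
    exact ⟨⟨L, h₁.comp (up x), h₂.comp (down x)⟩, ⟨L', h₁'.comp (down x), h₂'.comp (up x)⟩⟩

/-- For `x < -1`: `d_{1,+}(x) = d_{2,-}(x)` and `d_{1,-}(x) = d_{2,+}(x)`;
for `-1 < x < 0`: `d_{1,+}(x) = d_{2,-}(x) e^{-2βπi}` and `d_{1,-}(x) = d_{2,+}(x) e^{-2βπi}`. -/
theorem gap_tacnode_d1_d2_boundary_values (γ : ℝ) (hγ : γ ∈ Set.Ioo (0:ℝ) 1) :
    (∀ x : ℝ, x < -1 →
      ((∃ L : ℂ,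
          Tendsto (fun ε : ℝ => d1 γ ((x:ℂ) + ε * Complex.I)) (𝓝[>] (0:ℝ)) (𝓝 L) ∧
          Tendsto (fun ε : ℝ => d2 γ ((x:ℂ) - ε * Complex.I)) (𝓝[>] (0:ℝ)) (𝓝 L)) ∧
       (∃ L : ℂ,
          Tendsto (fun ε : ℝ => d1 γ ((x:ℂ) - ε * Complex.I)) (𝓝[>] (0:ℝ)) (𝓝 L) ∧
          Tendsto (fun ε : ℝ => d2 γ ((x:ℂ) + ε * Complex.I)) (𝓝[>] (0:ℝ)) (𝓝 L)))) ∧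
    (∀ x : ℝ, -1 < x → x < 0 →
      ((∃ L : ℂ,
          Tendsto (fun ε : ℝ => d1 γ ((x:ℂ) + ε * Complex.I)) (𝓝[>] (0:ℝ))
            (𝓝 (L * Complex.exp (-2 * beta γ * Real.pi * Complex.I))) ∧
          Tendsto (fun ε : ℝ => d2 γ ((x:ℂ) - ε * Complex.I)) (𝓝[>] (0:ℝ)) (𝓝 L)) ∧
       (∃ L : ℂ,
          Tendsto (fun ε : ℝ => d1 γ ((x:ℂ) - ε * Complex.I)) (𝓝[>] (0:ℝ))
            (𝓝 (L * Complex.exp (-2 * beta γ * Real.pi * Complex.I))) ∧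
          Tendsto (fun ε : ℝ => d2 γ ((x:ℂ) + ε * Complex.I)) (𝓝[>] (0:ℝ)) (𝓝 L)))) :=
  gap_tacnode_d1_d2_boundary_values_general γ
end

section
/- As z → −1 with Im z > 0, one has d₁(z) = e^{−βπi}·4^{−β}·(z+1)^{β}·(1 + (β/2)(z+1) + O((z+1)²)) and d₂(z) = e^{βπi}·4^{β}·(z+1)^{−β}·(1 − (β/2)(z+1) + O((z+1)²)), where (z+1)^{±β} and 4^{±β} are principal branches. -/
open Complex Filter Topology Set Asymptotics

/-! Write `√z = i s` with `s = √(-z)`, `Re s > 0`. Then `(√z - i)/(√z + i) = (s - 1)/(s + 1)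
= -(z + 1) · (s + 1)⁻²`, and for `Im z > 0` both `z + 1` and `(s + 1)⁻²` lie in the upper half
plane, so the arguments add without crossing the cut and the principal power splits as
`e^{-bπi} (z + 1)^b 4^{-b} (4 / (s + 1)²)^b`. In `w = z + 1` the last factor is analytic at `0`
(`s = √(1 - w)`), equal to `1` there with derivative `b/2`, which gives the expansion of `d₁`.
Since `λ(-ζ) = λ(ζ)⁻¹` and the quotient stays off the cut, `d₂` is the case `b = -β`. -/

open scoped Real

namespace Complex

lemma log_eq_log_neg_add_pi_mul_I_of_im_pos {z : ℂ} (hz : 0 < z.im) : log z = log (-z) + π * I := by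
  have hz0 : -z ≠ 0 := neg_ne_zero.2 fun h => by simp [h] at hz
  have harg : arg (-1) + arg (-z) ∈ Set.Ioc (-π) π := by
    rw [arg_neg_one, arg_neg_eq_arg_sub_pi_of_im_pos hz]
    constructor <;> linarith [arg_le_pi z, arg_nonneg_iff.2 hz.le, Real.pi_pos]
  calc log z = log (-1 * -z) := by rw [neg_one_mul, neg_neg]
    _ = log (-z) + π * I := by rw [log_mul (by norm_num) hz0 harg, log_neg_one, add_comm]

lemma cpow_eq_exp_mul_cpow_neg_of_im_pos {z : ℂ} (hz : 0 < z.im) (b : ℂ) :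
    z ^ b = exp (b * π * I) * (-z) ^ b := by
  have hz0 : z ≠ 0 := fun h => by simp [h] at hz
  rw [cpow_def_of_ne_zero hz0, cpow_def_of_ne_zero (neg_ne_zero.2 hz0),
    log_eq_log_neg_add_pi_mul_I_of_im_pos hz, ← exp_add]
  ring_nf

lemma cpow_one_half_eq_I_mul_of_im_pos {z : ℂ} (hz : 0 < z.im) :
    z ^ (1 / 2 : ℂ) = I * (-z) ^ (1 / 2 : ℂ) := by
  rw [cpow_eq_exp_mul_cpow_neg_of_im_pos hz, show (1 / 2 : ℂ) * π * I = π / 2 * I by ring,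
    exp_pi_div_two_mul_I]

lemma re_pos_and_im_neg_cpow_one_half_of_im_neg {u : ℂ} (hu : u.im < 0) :
    0 < (u ^ (1 / 2 : ℂ)).re ∧ (u ^ (1 / 2 : ℂ)).im < 0 := by
  have hu0 : u ≠ 0 := fun h => by simp [h] at hu
  have harg : arg u < 0 := arg_neg_iff.2 hu
  have him : (log u * (1 / 2)).im = arg u / 2 := by simp [log_im]; ring
  rw [cpow_def_of_ne_zero hu0, exp_re, exp_im, him]
  exact ⟨mul_pos (Real.exp_pos _) (Real.cos_pos_of_mem_Ioo
      ⟨by linarith [neg_pi_lt_arg u], by linarith [Real.pi_pos]⟩),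
    mul_neg_of_pos_of_neg (Real.exp_pos _)
      (Real.sin_neg_of_neg_of_neg_pi_lt (by linarith) (by linarith [neg_pi_lt_arg u]))⟩

lemma im_inv_sq_pos {v : ℂ} (hre : 0 < v.re) (him : v.im < 0) : 0 < ((v ^ 2)⁻¹).im := by
  have hv : v ^ 2 ≠ 0 := pow_ne_zero 2 fun h => by simp [h] at hre
  rw [inv_im, sq, mul_im]
  exact div_pos (by nlinarith) (normSq_pos.2 (by rwa [← sq]))

lemma mul_cpow_of_arg_add_mem {x y : ℂ} (hx : x ≠ 0) (hy : y ≠ 0)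
    (h : arg x + arg y ∈ Set.Ioc (-π) π) (b : ℂ) : (x * y) ^ b = x ^ b * y ^ b := by
  rw [cpow_def_of_ne_zero (mul_ne_zero hx hy), cpow_def_of_ne_zero hx, cpow_def_of_ne_zero hy,
    log_mul hx hy h, add_mul, exp_add]

lemma arg_neg_add_arg_mem_Ioo {w q : ℂ} (hw : 0 < w.im) (hq : 0 < q.im) :
    arg (-w) + arg q ∈ Set.Ioo (-π) π := by
  have hw' : arg (-w) < 0 := arg_neg_iff.2 (by simpa using hw)
  constructor <;> linarith [neg_pi_lt_arg (-w), arg_nonneg_iff.2 hq.le,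
    arg_lt_pi_iff.2 (Or.inr hq.ne')]

end Complex

open Complex

lemma im_inv_sq_cpow_one_half_neg_add_one_pos {z : ℂ} (hz : 0 < z.im) :
    0 < ((((-z) ^ (1 / 2 : ℂ)) + 1) ^ 2)⁻¹.im := by
  obtain ⟨hre, him⟩ := re_pos_and_im_neg_cpow_one_half_of_im_neg (u := -z) (by simpa using hz)
  exact im_inv_sq_pos (by rw [add_re, one_re]; linarith) (by rwa [add_im, one_im, add_zero])

lemma mobius_cpow_one_half_eq {z : ℂ} (hz : 0 < z.im) :
    (z ^ (1 / 2 : ℂ) - I) / (z ^ (1 / 2 : ℂ) + I)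
      = -(z + 1) * (((-z) ^ (1 / 2 : ℂ) + 1) ^ 2)⁻¹ := by
  set s := (-z) ^ (1 / 2 : ℂ)
  have hre : 0 < (s + 1).re := by
    rw [add_re, one_re]
    linarith [(re_pos_and_im_neg_cpow_one_half_of_im_neg (u := -z) (by simpa using hz)).1]
  have hs1 : s + 1 ≠ 0 := fun h => by simp [h] at hre
  have hss : s ^ 2 = -z := by
    rw [sq, ← cpow_add _ _ (neg_ne_zero.2 fun h => by simp [h] at hz)]
    norm_num
  rw [cpow_one_half_eq_I_mul_of_im_pos hz, show I * s - I = I * (s - 1) by ring,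
    show I * s + I = I * (s + 1) by ring, mul_div_mul_left _ _ I_ne_zero]
  field_simp
  linear_combination hss

lemma arg_mobius_cpow_one_half_ne_pi {z : ℂ} (hz : 0 < z.im) :
    arg ((z ^ (1 / 2 : ℂ) - I) / (z ^ (1 / 2 : ℂ) + I)) ≠ π := by
  have hw : 0 < (z + 1).im := by simpa using hz
  have hq := im_inv_sq_cpow_one_half_neg_add_one_pos hz
  have hmem := arg_neg_add_arg_mem_Ioo hw hq
  rw [mobius_cpow_one_half_eq hz, (arg_mul_eq_add_arg_iff
    (neg_ne_zero.2 fun h => by simp [h] at hw) (fun h => by rw [h] at hq; simp at hq)).2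
    (Set.Ioo_subset_Ioc_self hmem)]
  exact hmem.2.ne

noncomputable def regularFactor (b w : ℂ) : ℂ := (4 / ((1 - w) ^ (1 / 2 : ℂ) + 1) ^ 2) ^ b

lemma mobius_cpow_one_half_cpow_eq {z : ℂ} (hz : 0 < z.im) (b : ℂ) :
    ((z ^ (1 / 2 : ℂ) - I) / (z ^ (1 / 2 : ℂ) + I)) ^ b
      = exp (-b * π * I) * 4 ^ (-b) * (z + 1) ^ b * regularFactor b (z + 1) := by
  set w := z + 1
  set q := (((-z) ^ (1 / 2 : ℂ) + 1) ^ 2)⁻¹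
  have hw : 0 < w.im := by simpa [w] using hz
  have hq : 0 < q.im := im_inv_sq_cpow_one_half_neg_add_one_pos hz
  have hw0 : w ≠ 0 := fun h => by simp [h] at hw
  have hq0 : q ≠ 0 := fun h => by rw [h] at hq; simp at hq
  have hneg : (-w) ^ b = exp (-b * π * I) * w ^ b := by
    rw [cpow_eq_exp_mul_cpow_neg_of_im_pos hw b, ← mul_assoc, ← exp_add, neg_mul, neg_mul,
      neg_add_cancel, exp_zero, one_mul]
  have hfour : regularFactor b w = 4 ^ b * q ^ b := by
    rw [regularFactor, show 1 - w = -z by ring, div_eq_mul_inv]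
    exact mul_cpow_of_arg_add_mem (by norm_num) hq0
      (by simpa using ⟨by linarith [Real.pi_pos, arg_nonneg_iff.2 hq.le], arg_le_pi q⟩) b
  rw [mobius_cpow_one_half_eq hz, mul_cpow_of_arg_add_mem (neg_ne_zero.2 hw0) hq0
    (Set.Ioo_subset_Ioc_self (arg_neg_add_arg_mem_Ioo hw hq)), hneg, hfour, cpow_neg]
  field_simp [cpow_ne_zero_iff]

lemma AnalyticAt.sub_add_smul_deriv_isBigO_sq {𝕜 E : Type*} [NontriviallyNormedField 𝕜]
    [NormedAddCommGroup E] [NormedSpace 𝕜 E] {f : 𝕜 → E} (hf : AnalyticAt 𝕜 f 0) :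
    (fun w => f w - (f 0 + w • deriv f 0)) =O[𝓝 0] fun w => w ^ 2 := by
  obtain ⟨p, hp⟩ := hf
  have hsum : ∀ y : 𝕜, p.partialSum 2 y = f 0 + y • deriv f 0 := fun y => by
    rw [FormalMultilinearSeries.partialSum, Finset.sum_range_succ, Finset.sum_range_one,
      hp.coeff_zero, p.apply_eq_pow_smul_coeff, pow_one, hp.deriv]
    rfl
  have h := hp.isBigO_sub_partialSum_pow 2
  simp only [zero_add, hsum, ← norm_pow] at h
  exact h.of_norm_right

lemma regularFactor_zero (b : ℂ) : regularFactor b 0 = 1 := by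
  norm_num [regularFactor]

lemma analyticAt_regularFactor (b : ℂ) : AnalyticAt ℂ (regularFactor b) 0 := by
  have hsqrt : AnalyticAt ℂ (fun w : ℂ => (1 - w) ^ (1 / 2 : ℂ)) 0 :=
    (analyticAt_const.sub analyticAt_id).cpow analyticAt_const (by simp)
  have hbase : AnalyticAt ℂ (fun w : ℂ => 4 / ((1 - w) ^ (1 / 2 : ℂ) + 1) ^ 2) 0 :=
    analyticAt_const.div ((hsqrt.add analyticAt_const).pow 2) (by norm_num)
  exact hbase.cpow analyticAt_const (by norm_num)

lemma hasDerivAt_regularFactor (b : ℂ) : HasDerivAt (regularFactor b) (b / 2) 0 := by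
  have hsqrt : HasDerivAt (fun w : ℂ => (1 - w) ^ (1 / 2 : ℂ)) (-(1 / 2)) 0 :=
    (((hasDerivAt_id (0 : ℂ)).const_sub 1).cpow_const (c := 1 / 2) (by simp)).congr_deriv
      (by norm_num)
  have hbase : HasDerivAt (fun w : ℂ => 4 / ((1 - w) ^ (1 / 2 : ℂ) + 1) ^ 2) (1 / 2) 0 :=
    ((hasDerivAt_const (0 : ℂ) (4 : ℂ)).fun_div ((hsqrt.add_const 1).fun_pow 2)
      (by norm_num)).congr_deriv (by norm_num)
  exact (hbase.cpow_const (c := b) (by norm_num)).congr_deriv (by norm_num [div_eq_mul_one_div])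

lemma regularFactor_sub_isBigO_sq (b : ℂ) :
    (fun w => regularFactor b w - (1 + b / 2 * w)) =O[𝓝 0] fun w => w ^ 2 := by
  simpa [regularFactor_zero, (hasDerivAt_regularFactor b).deriv, mul_comm]
    using (analyticAt_regularFactor b).sub_add_smul_deriv_isBigO_sq

lemma isBigO_sub_of_eventuallyEq_regularFactor {l : Filter ℂ}
    (hl : Tendsto (fun z => z + 1) l (𝓝 0)) {f : ℂ → ℂ} (C b : ℂ)
    (hf : ∀ᶠ z in l, f z = C * (z + 1) ^ b * regularFactor b (z + 1)) :
    (fun z => f z - C * (z + 1) ^ b * (1 + b / 2 * (z + 1)))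
      =O[l] fun z => (z + 1) ^ b * (z + 1) ^ 2 := by
  refine (((isBigO_refl (fun z => (z + 1) ^ b) l).const_mul_left C).mul
    ((regularFactor_sub_isBigO_sq b).comp_tendsto hl)).congr' ?_ EventuallyEq.rfl
  filter_upwards [hf] with z hz
  simp only [Function.comp_apply, hz]
  ring

lemma d1_eq_of_im_pos {γ : ℝ} {z : ℂ} (hz : 0 < z.im) :
    d1 γ z = exp (-beta γ * π * I) * 4 ^ (-beta γ) * (z + 1) ^ beta γ
      * regularFactor (beta γ) (z + 1) :=
  mobius_cpow_one_half_cpow_eq hz _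

lemma d2_eq_of_im_pos {γ : ℝ} {z : ℂ} (hz : 0 < z.im) :
    d2 γ z = exp (beta γ * π * I) * 4 ^ beta γ * (z + 1) ^ (-beta γ)
      * regularFactor (-beta γ) (z + 1) := by
  have hinv : (-z ^ (1 / 2 : ℂ) - I) / (-z ^ (1 / 2 : ℂ) + I)
      = ((z ^ (1 / 2 : ℂ) - I) / (z ^ (1 / 2 : ℂ) + I))⁻¹ := by
    rw [inv_div, ← neg_div_neg_eq]
    ring_nf
  rw [d2, lam, hinv, inv_cpow _ _ (arg_mobius_cpow_one_half_ne_pi hz), ← cpow_neg,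
    mobius_cpow_one_half_cpow_eq hz, neg_neg]

theorem gap_tacnode_d1_d2_asymptotics_at_minus_one_general (γ : ℝ) :
    (fun z : ℂ => d1 γ z -
        Complex.exp (-(beta γ) * Real.pi * Complex.I) * (4:ℂ) ^ (-(beta γ)) *
          (z + 1) ^ (beta γ) * (1 + (beta γ / 2) * (z + 1)))
      =O[𝓝[{z : ℂ | 0 < z.im}] (-1:ℂ)]
        (fun z : ℂ => (z + 1) ^ (beta γ) * (z + 1)^2) ∧
    (fun z : ℂ => d2 γ z -
        Complex.exp ((beta γ) * Real.pi * Complex.I) * (4:ℂ) ^ (beta γ) *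
          (z + 1) ^ (-(beta γ)) * (1 - (beta γ / 2) * (z + 1)))
      =O[𝓝[{z : ℂ | 0 < z.im}] (-1:ℂ)]
        (fun z : ℂ => (z + 1) ^ (-(beta γ)) * (z + 1)^2) := by
  have hl : Tendsto (fun z : ℂ => z + 1) (𝓝[{z : ℂ | 0 < z.im}] (-1)) (𝓝 0) :=
    tendsto_nhdsWithin_of_tendsto_nhds (by simpa using (continuous_add_const (1 : ℂ)).tendsto (-1))
  have hupper : ∀ᶠ z in 𝓝[{z : ℂ | 0 < z.im}] (-1 : ℂ), 0 < z.im := eventually_mem_nhdsWithin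
  refine ⟨isBigO_sub_of_eventuallyEq_regularFactor hl _ _ (hupper.mono fun z => d1_eq_of_im_pos), ?_⟩
  refine (isBigO_sub_of_eventuallyEq_regularFactor hl _ _
    (hupper.mono fun z => d2_eq_of_im_pos)).congr_left fun z => ?_
  ring

/-- As `z → -1` with `Im z > 0`,
`d₁(z) = e^{-βπi} 4^{-β} (z+1)^{β} (1 + (β/2)(z+1) + O((z+1)²))` and
`d₂(z) = e^{βπi} 4^{β} (z+1)^{-β} (1 - (β/2)(z+1) + O((z+1)²))`. -/
theorem gap_tacnode_d1_d2_asymptotics_at_minus_one (γ : ℝ) (hγ : γ ∈ Set.Ioo (0:ℝ) 1) :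
    (fun z : ℂ => d1 γ z -
        Complex.exp (-(beta γ) * Real.pi * Complex.I) * (4:ℂ) ^ (-(beta γ)) *
          (z + 1) ^ (beta γ) * (1 + (beta γ / 2) * (z + 1)))
      =O[𝓝[{z : ℂ | 0 < z.im}] (-1:ℂ)]
        (fun z : ℂ => (z + 1) ^ (beta γ) * (z + 1)^2) ∧
    (fun z : ℂ => d2 γ z -
        Complex.exp ((beta γ) * Real.pi * Complex.I) * (4:ℂ) ^ (beta γ) *
          (z + 1) ^ (-(beta γ)) * (1 - (beta γ / 2) * (z + 1)))
      =O[𝓝[{z : ℂ | 0 < z.im}] (-1:ℂ)]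
        (fun z : ℂ => (z + 1) ^ (-(beta γ)) * (z + 1)^2) :=
  gap_tacnode_d1_d2_asymptotics_at_minus_one_general γ
end
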